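/- arXiv:1610.09371 — 2 statements merged into one kernel-verified Lean document; each statement's English description precedes it below -/
import Mathlib

section
/- The set of multisets of size 3 over products of two distinct primes from {2,3,5,7,11} whose total product is divisible by 2·3·5·7·11, together with multisets allowing repeated-prime squares, i.e. multisets {a,b,c} with a,b,c ∈ P₂ = {p·q : p,q ∈ {2,3,5,7,11}} and 2310 ∣ a·b·c, has exactly 45 elements. -/
def Pset : Set ℕ := {2, 3, 5, 7, 11}

def P2 : Set ℕ := {x | ∃ p ∈ Pset, ∃ q ∈ Pset, x = p * q}

def Vset : Finset ℕ := {4,6,9,10,14,15,21,22,25,33,35,49,55,77,121}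

lemma memP2 (p q : ℕ) (hp : p ∈ Pset) (hq : q ∈ Pset) : p * q ∈ P2 := ⟨p, hp, q, hq, rfl⟩

lemma P2_iff (x : ℕ) : x ∈ P2 ↔ x ∈ Vset := by
  constructor
  · rintro ⟨p, hp, q, hq, rfl⟩
    simp only [Pset, Set.mem_insert_iff, Set.mem_singleton_iff] at hp hq
    rcases hp with rfl|rfl|rfl|rfl|rfl <;> rcases hq with rfl|rfl|rfl|rfl|rfl <;> decide
  · intro hx
    have h2 : (2:ℕ) ∈ Pset := by simp [Pset]
    have h3 : (3:ℕ) ∈ Pset := by simp [Pset]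
    have h5 : (5:ℕ) ∈ Pset := by simp [Pset]
    have h7 : (7:ℕ) ∈ Pset := by simp [Pset]
    have h11 : (11:ℕ) ∈ Pset := by simp [Pset]
    fin_cases hx
    · exact memP2 2 2 h2 h2
    · exact memP2 2 3 h2 h3
    · exact memP2 3 3 h3 h3
    · exact memP2 2 5 h2 h5
    · exact memP2 2 7 h2 h7
    · exact memP2 3 5 h3 h5
    · exact memP2 3 7 h3 h7
    · exact memP2 2 11 h2 h11
    · exact memP2 5 5 h5 h5
    · exact memP2 3 11 h3 h11
    · exact memP2 5 7 h5 h7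
    · exact memP2 7 7 h7 h7
    · exact memP2 5 11 h5 h11
    · exact memP2 7 11 h7 h11
    · exact memP2 11 11 h11 h11

def Fset : Finset (Multiset ℕ) :=
  ((Vset ×ˢ Vset ×ˢ Vset).filter fun t => 2310 ∣ t.1 * t.2.1 * t.2.2).image
    fun t => {t.1, t.2.1, t.2.2}

set_option maxRecDepth 40000 in
theorem stmt_1 :
    {m : Multiset ℕ | Multiset.card m = 3 ∧ (∀ x ∈ m, x ∈ P2) ∧ 2310 ∣ m.prod}.ncard = 45 := by
  have hset : {m : Multiset ℕ | Multiset.card m = 3 ∧ (∀ x ∈ m, x ∈ P2) ∧ 2310 ∣ m.prod}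
      = ↑Fset := by
    ext m
    simp only [Set.mem_setOf_eq, Finset.coe_image, Set.mem_image, Finset.mem_coe,
      Finset.mem_filter, Finset.mem_product, Fset]
    constructor
    · rintro ⟨hcard, hmem, hdvd⟩
      obtain ⟨a, b, c, rfl⟩ := Multiset.card_eq_three.mp hcard
      have ha := (P2_iff a).mp (hmem a (by simp))
      have hb := (P2_iff b).mp (hmem b (by simp))
      have hc := (P2_iff c).mp (hmem c (by simp))
      refine ⟨(a, b, c), ⟨⟨ha, hb, hc⟩, ?_⟩, rfl⟩
      simpa [mul_assoc] using hdvd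
    · rintro ⟨⟨a, b, c⟩, ⟨⟨ha, hb, hc⟩, hdvd⟩, rfl⟩
      refine ⟨by simp, ?_, ?_⟩
      · intro x hx
        simp only [Multiset.insert_eq_cons, Multiset.mem_cons, Multiset.mem_singleton] at hx
        rcases hx with rfl|rfl|rfl
        · exact (P2_iff x).mpr ha
        · exact (P2_iff x).mpr hb
        · exact (P2_iff x).mpr hc
      · simpa [mul_assoc] using hdvd
  rw [hset, Set.ncard_coe_finset]
  decide
end

section
/- For the Instant Insanity matrix A with rows (14,25,15), (6,35,10), (6,14,15), (9,14,35), there is exactly one unordered pair {s, t} of partial solutions (choices s,t : Fin 4 → Fin 3 with entry products equal to 44100) such that s i ≠ t i for all i. -/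
def A : Fin 4 → Fin 3 → ℕ := ![![14, 25, 15], ![6, 35, 10], ![6, 14, 15], ![9, 14, 35]]

def psol (s : Fin 4 → Fin 3) : Prop := ∏ i, A i (s i) = 44100

lemma fun_eq (s t : Fin 4 → Fin 3) :
    s = t ↔ (s 0 = t 0 ∧ s 1 = t 1 ∧ s 2 = t 2 ∧ s 3 = t 3) := by
  constructor
  · rintro rfl; exact ⟨rfl, rfl, rfl, rfl⟩
  · rintro ⟨h0, h1, h2, h3⟩; funext i; fin_cases i <;> assumption

lemma key : ∀ a b c d : Fin 3, A 0 a * A 1 b * A 2 c * A 3 d = 44100 ↔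
    ((a = 0 ∧ b = 0 ∧ c = 2 ∧ d = 2) ∨ (a = 2 ∧ b = 0 ∧ c = 1 ∧ d = 2) ∨
     (a = 2 ∧ b = 1 ∧ c = 0 ∧ d = 1)) := by decide

lemma psol_char (s : Fin 4 → Fin 3) :
    psol s ↔ s = ![0,0,2,2] ∨ s = ![2,0,1,2] ∨ s = ![2,1,0,1] := by
  rw [psol, Fin.prod_univ_four, key, fun_eq s ![0,0,2,2], fun_eq s ![2,0,1,2],
    fun_eq s ![2,1,0,1]]
  exact Iff.rfl

theorem stmt_4 :
    {P : Set (Fin 4 → Fin 3) | ∃ s t : Fin 4 → Fin 3,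
      P = {s, t} ∧ psol s ∧ psol t ∧ ∀ i, s i ≠ t i}.ncard = 1 := by
  have h : {P : Set (Fin 4 → Fin 3) | ∃ s t : Fin 4 → Fin 3,
      P = {s, t} ∧ psol s ∧ psol t ∧ ∀ i, s i ≠ t i}
      = {({![0,0,2,2], ![2,1,0,1]} : Set (Fin 4 → Fin 3))} := by
    ext P
    constructor
    · rintro ⟨s, t, rfl, hs, ht, hst⟩
      rcases (psol_char s).mp hs with rfl | rfl | rfl <;>
        rcases (psol_char t).mp ht with rfl | rfl | rfl <;>
        first
          | (exact absurd (hst 0) (by decide))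
          | (exact absurd (hst 1) (by decide))
          | rfl
          | (simp [Set.pair_comm])
    · rintro rfl
      exact ⟨![0,0,2,2], ![2,1,0,1], rfl, (psol_char _).mpr (Or.inl rfl),
        (psol_char _).mpr (Or.inr (Or.inr rfl)), by decide⟩
  rw [h, Set.ncard_singleton]
end
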